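/- arXiv:1201.1209 — 5 statements merged into one kernel-verified Lean document; each statement's English description precedes it below -/
import Mathlib

section
/- There exist constants C > 0 and a > 0 such that for all 0 < t ≤ 1, all x, y ∈ ℝ^d and all 1 ≤ j ≤ d, the partial derivative of k_t^0 with respect to y_j satisfies |∂k_t^0/∂y_j (x,y)| ≤ C t^{−(d+1)/2} e^{−(a/t)|x−y|²}. -/
/-!
Differentiating the Gaussian gives
`∂k_t^0/∂y_j = -½ k_t^0 (tanh t (x+y)_j - coth t (x-y)_j)`.
Each linear factor is absorbed by part of the matching Gaussian through `v e^{-v²} ≤ 1`, at the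
cost of `O(√(tanh t)) = O(1)` and `O(√(coth t)) = O(t^{-1/2})` respectively, since
`1/t ≤ coth t ≤ 2/t` on `(0, 1]`. What is left of `e^{-coth t |x-y|²/4}` is at most
`e^{-|x-y|²/(8t)}`, and the prefactor `(2π sinh 2t)^{-d/2}` is at most `t^{-d/2}`.
-/

open Real

/-- The classical Hermite (Mehler) heat kernel on `ℝ^d`:
`k_t^0(x,y) = (2π sinh(2t))^{-d/2} exp(-(1/4)(tanh(t)|x+y|² + coth(t)|x-y|²))`,
where `coth t = cosh t / sinh t`. -/
noncomputable def mehlerKernel (d : ℕ) (t : ℝ) (x y : EuclideanSpace ℝ (Fin d)) : ℝ :=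
  (2 * Real.pi * Real.sinh (2 * t)) ^ (-(d : ℝ) / 2) *
    Real.exp (-(1 / 4) *
      (Real.tanh t * ‖x + y‖ ^ 2 + (Real.cosh t / Real.sinh t) * ‖x - y‖ ^ 2))


/-- The partial derivative `∂k_t^0/∂y_j (x,y)` of the Mehler kernel in the `j`-th
coordinate of the second variable. -/
noncomputable def mehlerPartialY (d : ℕ) (t : ℝ) (j : Fin d)
    (x y : EuclideanSpace ℝ (Fin d)) : ℝ :=
  fderiv ℝ (fun z => mehlerKernel d t x z) y (EuclideanSpace.single j 1)

namespace Real

lemma mul_exp_neg_sq_le_one (v : ℝ) : v * exp (-v ^ 2) ≤ 1 := by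
  have hv : v ≤ exp (v ^ 2) := by nlinarith [add_one_le_exp (v ^ 2)]
  calc v * exp (-v ^ 2) ≤ exp (v ^ 2) * exp (-v ^ 2) := by gcongr
    _ = 1 := by rw [← exp_add, add_neg_cancel, exp_zero]

lemma mul_mul_exp_neg_mul_sq_div_le {κ c : ℝ} (hκ : 0 ≤ κ) (hc : 0 < c) (u : ℝ) :
    κ * u * exp (-(κ * u ^ 2) / c) ≤ √(c * κ) := by
  set v := √(κ / c) * u
  have hv : v ^ 2 = κ * u ^ 2 / c := by
    rw [mul_pow, sq_sqrt (div_nonneg hκ hc.le)]; ring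
  have hκu : κ * u = √(c * κ) * v := by
    rw [← mul_assoc, ← sqrt_mul (by positivity), show c * κ * (κ / c) = κ ^ 2 by field_simp,
      sqrt_sq hκ]
  calc κ * u * exp (-(κ * u ^ 2) / c) = √(c * κ) * (v * exp (-v ^ 2)) := by
        rw [hκu, hv, neg_div, mul_assoc]
    _ ≤ √(c * κ) * 1 := by gcongr; exact mul_exp_neg_sq_le_one v
    _ = √(c * κ) := mul_one _

lemma sinh_le_mul_cosh {t : ℝ} (ht : 0 ≤ t) : sinh t ≤ t * cosh t := by
  have hderiv (s : ℝ) : HasDerivAt (fun s ↦ s * cosh s - sinh s) (s * sinh s) s :=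
    (((hasDerivAt_id' s).mul (hasDerivAt_cosh s)).sub (hasDerivAt_sinh s)).congr_deriv
      (by ring)
  have hmono := monotone_of_hasDerivAt_nonneg hderiv fun s ↦ by
    rcases le_total 0 s with hs | hs
    · exact mul_nonneg hs (sinh_nonneg_iff.mpr hs)
    · exact mul_nonneg_of_nonpos_of_nonpos hs (sinh_nonpos_iff.mpr hs)
  simpa using hmono ht

lemma one_div_le_cosh_div_sinh {t : ℝ} (ht : 0 < t) : 1 / t ≤ cosh t / sinh t := by
  rw [div_le_div_iff₀ ht (sinh_pos_iff.mpr ht)]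
  linarith [sinh_le_mul_cosh ht.le]

lemma cosh_div_sinh_le_two_div {t : ℝ} (ht : 0 < t) (ht1 : t ≤ 1) : cosh t / sinh t ≤ 2 / t := by
  have hcosh : cosh t ≤ 2 := by
    rw [cosh_eq]
    have h1 : exp t ≤ exp 1 := exp_le_exp.mpr ht1
    have h2 : exp (-t) ≤ 1 := exp_le_one_iff.mpr (by linarith)
    linarith [exp_one_lt_d9]
  rw [div_le_div_iff₀ (sinh_pos_iff.mpr ht) ht]
  nlinarith [self_le_sinh_iff.mpr ht.le, cosh_pos t]

lemma tanh_nonneg {t : ℝ} (ht : 0 ≤ t) : 0 ≤ tanh t := by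
  rw [tanh_eq_sinh_div_cosh]; exact div_nonneg (sinh_nonneg_iff.mpr ht) (cosh_pos t).le

end Real

lemma mehlerPartialY_eq (d : ℕ) (t : ℝ) (j : Fin d) (x y : EuclideanSpace ℝ (Fin d)) :
    mehlerPartialY d t j x y = mehlerKernel d t x y *
      (-(1 / 2) * (tanh t * (x + y) j - cosh t / sinh t * (x - y) j)) := by
  have hplus : HasFDerivAt (fun z ↦ x + z) (ContinuousLinearMap.id ℝ _) y :=
    (hasFDerivAt_id y).const_add x
  have hminus : HasFDerivAt (fun z ↦ x - z) (-ContinuousLinearMap.id ℝ _) y :=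
    (hasFDerivAt_id y).const_sub x
  have hk : HasFDerivAt (fun z ↦ mehlerKernel d t x z) _ y :=
    ((((hplus.norm_sq.const_mul (tanh t)).add (hminus.norm_sq.const_mul (cosh t / sinh t))).const_mul
      (-(1 / 4))).exp).const_mul ((2 * π * sinh (2 * t)) ^ (-(d : ℝ) / 2))
  rw [mehlerPartialY, hk.fderiv]
  simp only [one_div, Pi.add_apply, neg_mul, map_add, ContinuousLinearMap.comp_id, smul_add,
    map_sub, ContinuousLinearMap.comp_neg, neg_sub, neg_smul, smul_neg,
    add_apply, neg_apply, smul_apply, sub_apply, coe_innerSL_apply,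
    EuclideanSpace.inner_single_right, conj_trivial, one_mul, nsmul_eq_mul, Nat.cast_ofNat,
    smul_eq_mul, mehlerKernel, PiLp.add_apply, PiLp.sub_apply, mul_neg]
  ring

lemma mehlerKernel_prefactor_le_rpow (d : ℕ) {t : ℝ} (ht : 0 < t) :
    (2 * π * sinh (2 * t)) ^ (-(d : ℝ) / 2) ≤ t ^ (-(d : ℝ) / 2) := by
  refine rpow_le_rpow_of_nonpos ht ?_ (by have := d.cast_nonneg (α := ℝ); linarith)
  nlinarith [self_lt_sinh_iff.mpr (by linarith : 0 < 2 * t), pi_gt_three]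

lemma mehlerKernel_prefactor_pos (d : ℕ) {t : ℝ} (ht : 0 < t) :
    0 < (2 * π * sinh (2 * t)) ^ (-(d : ℝ) / 2) :=
  rpow_pos_of_pos (by have := sinh_pos_iff.mpr (by linarith : 0 < 2 * t); positivity) _

lemma add_mul_exp_neg_quadratic_le {A B s r t : ℝ} (ht : 0 < t) (ht1 : t ≤ 1) (hA0 : 0 ≤ A)
    (hA1 : A ≤ 1) (hB_ge : 1 / t ≤ B) (hB_le : B ≤ 2 / t) :
    (A * s + B * r) * exp (-(1 / 4) * (A * s ^ 2 + B * r ^ 2)) ≤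
      6 / √t * exp (-(1 / 8 / t) * r ^ 2) := by
  have hB0 : 0 ≤ B := le_trans (by positivity) hB_ge
  have hA : A * s * exp (-(A * s ^ 2) / 4) ≤ 2 := calc
    _ ≤ √(4 * A) := mul_mul_exp_neg_mul_sq_div_le hA0 (by norm_num) s
    _ ≤ √(2 ^ 2) := by gcongr; linarith
    _ = 2 := sqrt_sq (by norm_num)
  have hB : B * r * exp (-(B * r ^ 2) / 8) ≤ 4 / √t := calc
    _ ≤ √(8 * B) := mul_mul_exp_neg_mul_sq_div_le hB0 (by norm_num) r
    _ ≤ √(4 ^ 2 / t) := by gcongr; linarith [show (4 : ℝ) ^ 2 / t = 8 * (2 / t) by ring]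
    _ = 4 / √t := by rw [sqrt_div' _ ht.le, sqrt_sq (by norm_num)]
  have hdecay : -(B * r ^ 2) / 8 ≤ -(1 / 8 / t) * r ^ 2 := by
    have := mul_le_mul_of_nonneg_right hB_ge (sq_nonneg r)
    have : 1 / 8 / t * r ^ 2 = 1 / t * r ^ 2 / 8 := by ring
    linarith
  set D := exp (-(1 / 8 / t) * r ^ 2)
  have hD1 : exp (-(B * r ^ 2) / 8) * exp (-(B * r ^ 2) / 8) ≤ D := by
    rw [← exp_add]; exact exp_le_exp.mpr (by linarith [mul_nonneg hB0 (sq_nonneg r)])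
  have hD2 : exp (-(A * s ^ 2) / 4) * exp (-(B * r ^ 2) / 8) ≤ D := by
    rw [← exp_add]; exact exp_le_exp.mpr (by linarith [mul_nonneg hA0 (sq_nonneg s)])
  have hsplit : exp (-(1 / 4) * (A * s ^ 2 + B * r ^ 2)) =
      exp (-(A * s ^ 2) / 4) * exp (-(B * r ^ 2) / 8) * exp (-(B * r ^ 2) / 8) := by
    simp only [← exp_add]; ring_nf
  have hone : 1 ≤ 1 / √t := one_le_one_div (sqrt_pos.mpr ht) (sqrt_le_one.mpr ht1)
  calc (A * s + B * r) * exp (-(1 / 4) * (A * s ^ 2 + B * r ^ 2))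
      = A * s * exp (-(A * s ^ 2) / 4) * (exp (-(B * r ^ 2) / 8) * exp (-(B * r ^ 2) / 8)) +
          B * r * exp (-(B * r ^ 2) / 8) * (exp (-(A * s ^ 2) / 4) * exp (-(B * r ^ 2) / 8)) := by
        rw [hsplit]; ring
    _ ≤ 2 * D + 4 / √t * D := by gcongr
    _ ≤ 2 * (1 / √t) * D + 4 / √t * D := by gcongr; linarith
    _ = 6 / √t * D := by ring

lemma abs_mehlerPartialY_le (d : ℕ) {t : ℝ} (ht : 0 < t) (j : Fin d)
    (x y : EuclideanSpace ℝ (Fin d)) :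
    |mehlerPartialY d t j x y| ≤ (2 * π * sinh (2 * t)) ^ (-(d : ℝ) / 2) / 2 *
      ((tanh t * ‖x + y‖ + cosh t / sinh t * ‖x - y‖) *
        exp (-(1 / 4) * (tanh t * ‖x + y‖ ^ 2 + cosh t / sinh t * ‖x - y‖ ^ 2))) := by
  have hA : 0 ≤ tanh t := tanh_nonneg ht.le
  have hB : 0 ≤ cosh t / sinh t := div_nonneg (cosh_pos t).le (sinh_pos_iff.mpr ht).le
  have hc := mehlerKernel_prefactor_pos d ht
  have hE := exp_pos (-(1 / 4) * (tanh t * ‖x + y‖ ^ 2 + cosh t / sinh t * ‖x - y‖ ^ 2))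
  have hcoord : |tanh t * (x + y) j - cosh t / sinh t * (x - y) j| ≤
      tanh t * ‖x + y‖ + cosh t / sinh t * ‖x - y‖ := calc
    _ ≤ |tanh t * (x + y) j| + |cosh t / sinh t * (x - y) j| := abs_sub _ _
    _ ≤ _ := by
      simp only [abs_mul, abs_of_nonneg hA, abs_of_nonneg hB, ← Real.norm_eq_abs]
      gcongr <;> exact PiLp.norm_apply_le _ _
  rw [mehlerPartialY_eq, mehlerKernel, abs_mul, abs_mul, abs_mul, abs_of_pos hc,
    abs_of_pos (exp_pos _), abs_neg, abs_of_pos one_half_pos]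
  linarith [mul_le_mul_of_nonneg_left hcoord (mul_pos hc hE).le]

theorem mehlerKernel_deriv_bound_small_time_general (d : ℕ) :
    ∃ C > (0 : ℝ), ∃ a > (0 : ℝ), ∀ t : ℝ, 0 < t → t ≤ 1 →
      ∀ x y : EuclideanSpace ℝ (Fin d), ∀ j : Fin d,
        |mehlerPartialY d t j x y| ≤
          C * t ^ (-((d : ℝ) + 1) / 2) * Real.exp (-(a / t) * ‖x - y‖ ^ 2) := by
  refine ⟨3, by norm_num, 1 / 8, by norm_num, fun t ht ht1 x y j ↦ ?_⟩
  have hsqrt : t ^ (-((d : ℝ) + 1) / 2) = t ^ (-(d : ℝ) / 2) / √t := by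
    rw [sqrt_eq_rpow, ← rpow_sub ht]; ring_nf
  have hc := mehlerKernel_prefactor_pos d ht
  calc |mehlerPartialY d t j x y|
      ≤ (2 * π * sinh (2 * t)) ^ (-(d : ℝ) / 2) / 2 *
          ((tanh t * ‖x + y‖ + cosh t / sinh t * ‖x - y‖) *
            exp (-(1 / 4) * (tanh t * ‖x + y‖ ^ 2 + cosh t / sinh t * ‖x - y‖ ^ 2))) :=
        abs_mehlerPartialY_le d ht j x y
    _ ≤ (2 * π * sinh (2 * t)) ^ (-(d : ℝ) / 2) / 2 *
          (6 / √t * exp (-(1 / 8 / t) * ‖x - y‖ ^ 2)) := by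
        refine mul_le_mul_of_nonneg_left ?_ (half_pos hc).le
        exact add_mul_exp_neg_quadratic_le ht ht1 (tanh_nonneg ht.le) (tanh_lt_one t).le
          (one_div_le_cosh_div_sinh ht) (cosh_div_sinh_le_two_div ht ht1)
    _ ≤ t ^ (-(d : ℝ) / 2) / 2 * (6 / √t * exp (-(1 / 8 / t) * ‖x - y‖ ^ 2)) := by
        gcongr ?_ / 2 * _; exact mehlerKernel_prefactor_le_rpow d ht
    _ = 3 * t ^ (-((d : ℝ) + 1) / 2) * exp (-(1 / 8 / t) * ‖x - y‖ ^ 2) := by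
        rw [hsqrt]; ring

/-- There exist `C > 0` and `a > 0` such that for all `0 < t ≤ 1`, all `x, y ∈ ℝ^d` and
all `1 ≤ j ≤ d`, `|∂k_t^0/∂y_j (x,y)| ≤ C t^{-(d+1)/2} e^{-(a/t)|x-y|²}`. -/
theorem mehlerKernel_deriv_bound_small_time (d : ℕ) (hd : 1 ≤ d) :
    ∃ C > (0 : ℝ), ∃ a > (0 : ℝ), ∀ t : ℝ, 0 < t → t ≤ 1 →
      ∀ x y : EuclideanSpace ℝ (Fin d), ∀ j : Fin d,
        |mehlerPartialY d t j x y| ≤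
          C * t ^ (-((d : ℝ) + 1) / 2) * Real.exp (-(a / t) * ‖x - y‖ ^ 2) :=
  mehlerKernel_deriv_bound_small_time_general d
end

section
/- There exist constants C > 0 and a > 0 such that for all t > 1, all x, y ∈ ℝ^d and all 1 ≤ j ≤ d, |y_j · k_t^0(x,y)| ≤ C e^{−dt} e^{−a|x−y|²}. -/
/-!
For `t ≥ 1` we have `tanh t ≥ tanh 1`, `coth t ≥ 1` and `sinh 2t ≥ e^{2t}/4`, hence with
`s = |x+y|`, `r = |x-y|`,
`k_t^0(x,y) ≤ (π/2)^{-d/2} e^{-dt} exp(-(tanh 1 / 4) s² - r²/4)`.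
Since `|y_j| ≤ |y| ≤ (s + r)/2`, the factor `s + r` is absorbed by the Gaussian in `s` and half
of the Gaussian in `r`, using `u e^{-cu²} ≤ 1 + 1/c`; the other half is `e^{-|x-y|²/8}`.
-/

open Real

namespace Real

lemma strictMono_tanh : StrictMono tanh := fun s t hst => by
  rwa [← artanh_lt_artanh_iff ⟨neg_one_lt_tanh s, tanh_lt_one s⟩
    ⟨neg_one_lt_tanh t, tanh_lt_one t⟩, artanh_tanh, artanh_tanh]

lemma tanh_pos {t : ℝ} (ht : 0 < t) : 0 < tanh t := by
  simpa using strictMono_tanh ht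

lemma one_le_cosh_div_sinh {t : ℝ} (ht : 0 < t) : 1 ≤ cosh t / sinh t :=
  (one_le_div (sinh_pos_iff.2 ht)).2 (sinh_lt_cosh t).le

lemma exp_div_four_le_sinh {u : ℝ} (hu : 1 / 2 ≤ u) : exp u / 4 ≤ sinh u := by
  have htwo : 2 ≤ exp (2 * u) := by linarith [add_one_le_exp (2 * u)]
  have hexp : exp u = exp (2 * u) * exp (-u) := by rw [← exp_add]; ring_nf
  have : 2 * exp (-u) ≤ exp u := by
    rw [hexp]
    exact mul_le_mul_of_nonneg_right htwo (exp_pos _).le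
  rw [sinh_eq]
  linarith

lemma mul_exp_neg_le_one (x : ℝ) : x * exp (-x) ≤ 1 := by
  rw [exp_neg, ← div_eq_mul_inv, div_le_one (exp_pos x)]
  linarith [add_one_le_exp x]

lemma mul_exp_neg_mul_sq_le {c : ℝ} (hc : 0 < c) (u : ℝ) :
    u * exp (-(c * u ^ 2)) ≤ 1 + 1 / c := by
  have hu : u ≤ 1 + u ^ 2 := by nlinarith [sq_nonneg (u - 1 / 2)]
  have hexp_le : exp (-(c * u ^ 2)) ≤ 1 := exp_le_one_iff.2 (neg_nonpos.2 (by positivity))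
  have hsq := mul_exp_neg_le_one (c * u ^ 2)
  have hsq' : u ^ 2 * exp (-(c * u ^ 2)) ≤ 1 / c := by
    rw [le_div_iff₀ hc]
    linarith
  calc u * exp (-(c * u ^ 2)) ≤ (1 + u ^ 2) * exp (-(c * u ^ 2)) :=
        mul_le_mul_of_nonneg_right hu (exp_pos _).le
    _ = exp (-(c * u ^ 2)) + u ^ 2 * exp (-(c * u ^ 2)) := by ring
    _ ≤ 1 + 1 / c := add_le_add hexp_le hsq'

lemma add_mul_exp_neg_le {b c s r : ℝ} (hb : 0 < b) (hc : 0 < c) (hs : 0 ≤ s) (hr : 0 ≤ r) :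
    (s + r) * exp (-(b * s ^ 2 + c * r ^ 2)) ≤ (1 + 1 / b) + (1 + 1 / c) := by
  have hs' : s * exp (-(b * s ^ 2)) * exp (-(c * r ^ 2)) ≤ 1 + 1 / b :=
    (mul_le_of_le_one_right (by positivity) (exp_le_one_iff.2 (by nlinarith))).trans
      (mul_exp_neg_mul_sq_le hb s)
  have hr' : r * exp (-(c * r ^ 2)) * exp (-(b * s ^ 2)) ≤ 1 + 1 / c :=
    (mul_le_of_le_one_right (by positivity) (exp_le_one_iff.2 (by nlinarith))).trans
      (mul_exp_neg_mul_sq_le hc r)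
  calc (s + r) * exp (-(b * s ^ 2 + c * r ^ 2))
      = s * exp (-(b * s ^ 2)) * exp (-(c * r ^ 2)) +
          r * exp (-(c * r ^ 2)) * exp (-(b * s ^ 2)) := by
        rw [neg_add, exp_add]; ring
    _ ≤ (1 + 1 / b) + (1 + 1 / c) := add_le_add hs' hr'

lemma rpow_two_pi_sinh_two_mul_le {p t : ℝ} (hp : 0 ≤ p) (ht : 1 / 4 ≤ t) :
    (2 * π * sinh (2 * t)) ^ (-p / 2) ≤ (π / 2) ^ (-p / 2) * exp (-p * t) := by
  have hsinh : π / 2 * exp (2 * t) ≤ 2 * π * sinh (2 * t) := by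
    have := exp_div_four_le_sinh (u := 2 * t) (by linarith)
    nlinarith [pi_pos]
  calc (2 * π * sinh (2 * t)) ^ (-p / 2)
      ≤ (π / 2 * exp (2 * t)) ^ (-p / 2) :=
        rpow_le_rpow_of_nonpos (by positivity) hsinh (by linarith)
    _ = (π / 2) ^ (-p / 2) * exp (-p * t) := by
        rw [mul_rpow (by positivity) (exp_pos _).le, ← exp_mul]
        ring_nf

lemma tanh_one_mul_add_le {t A B : ℝ} (ht : 1 ≤ t) (hA : 0 ≤ A) (hB : 0 ≤ B) :
    tanh 1 * A + B ≤ tanh t * A + cosh t / sinh t * B :=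
  add_le_add (mul_le_mul_of_nonneg_right (strictMono_tanh.monotone ht) hA)
    (le_mul_of_one_le_left hB (one_le_cosh_div_sinh (by linarith)))

end Real

lemma two_mul_norm_le_norm_add_add_norm_sub {E : Type*} [SeminormedAddCommGroup E]
    [NormedSpace ℝ E] (x y : E) : 2 * ‖y‖ ≤ ‖x + y‖ + ‖x - y‖ := by
  calc 2 * ‖y‖ = ‖(2 : ℝ) • y‖ := by rw [norm_smul, Real.norm_two]
    _ = ‖(x + y) - (x - y)‖ := by rw [two_smul]; abel_nf
    _ ≤ ‖x + y‖ + ‖x - y‖ := norm_sub_le _ _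

lemma EuclideanSpace.abs_apply_le_norm_add_add_norm_sub_div_two {ι : Type*} [Fintype ι]
    (x y : EuclideanSpace ℝ ι) (j : ι) : |y j| ≤ (‖x + y‖ + ‖x - y‖) / 2 := by
  have hy := two_mul_norm_le_norm_add_add_norm_sub x y
  have hyj : ‖y j‖ ≤ ‖y‖ := PiLp.norm_apply_le y j
  rw [Real.norm_eq_abs] at hyj
  linarith

lemma mehlerKernel_pos (d : ℕ) {t : ℝ} (ht : 0 < t) (x y : EuclideanSpace ℝ (Fin d)) :
    0 < mehlerKernel d t x y := by
  have := sinh_pos_iff.2 (by linarith : 0 < 2 * t)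
  unfold mehlerKernel
  positivity

lemma mehlerKernel_le (d : ℕ) {t : ℝ} (ht : 1 ≤ t) (x y : EuclideanSpace ℝ (Fin d)) :
    mehlerKernel d t x y ≤ (π / 2) ^ (-(d : ℝ) / 2) * exp (-d * t) *
      exp (-(tanh 1 / 4 * ‖x + y‖ ^ 2 + ‖x - y‖ ^ 2 / 4)) := by
  have hexponent := tanh_one_mul_add_le ht (sq_nonneg ‖x + y‖) (sq_nonneg ‖x - y‖)
  unfold mehlerKernel
  refine mul_le_mul (rpow_two_pi_sinh_two_mul_le d.cast_nonneg (by linarith)) (exp_le_exp.2 ?_)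
    (exp_pos _).le (by positivity)
  linarith

theorem mehlerKernel_coord_bound_large_time_general (d : ℕ) :
    ∃ C > (0 : ℝ), ∃ a > (0 : ℝ), ∀ t : ℝ, 1 < t →
      ∀ x y : EuclideanSpace ℝ (Fin d), ∀ j : Fin d,
        |y j * mehlerKernel d t x y| ≤
          C * Real.exp (-(d : ℝ) * t) * Real.exp (-a * ‖x - y‖ ^ 2) := by
  set b := tanh 1 / 4
  have hb : 0 < b := by have := tanh_pos one_pos; positivity
  refine ⟨(π / 2) ^ (-(d : ℝ) / 2) * (((1 + 1 / b) + (1 + 1 / (1 / 8))) / 2),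
    by positivity, 1 / 8, by norm_num, fun t ht x y j => ?_⟩
  set s := ‖x + y‖
  set r := ‖x - y‖
  have hsplit : exp (-(b * s ^ 2 + r ^ 2 / 4)) =
      exp (-(b * s ^ 2 + 1 / 8 * r ^ 2)) * exp (-(1 / 8) * r ^ 2) := by
    rw [← exp_add]
    ring_nf
  have hK := mehlerKernel_pos d (by linarith : 0 < t) x y
  rw [abs_mul, abs_of_pos hK]
  calc |y j| * mehlerKernel d t x y
      ≤ (s + r) / 2 * ((π / 2) ^ (-(d : ℝ) / 2) * exp (-d * t) *
          exp (-(b * s ^ 2 + r ^ 2 / 4))) :=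
        mul_le_mul (EuclideanSpace.abs_apply_le_norm_add_add_norm_sub_div_two x y j)
          (mehlerKernel_le d ht.le x y) hK.le (by positivity)
    _ = (π / 2) ^ (-(d : ℝ) / 2) * ((s + r) * exp (-(b * s ^ 2 + 1 / 8 * r ^ 2)) / 2) *
          exp (-d * t) * exp (-(1 / 8) * r ^ 2) := by
        rw [hsplit]
        ring
    _ ≤ _ := by
        gcongr
        exact add_mul_exp_neg_le hb (by norm_num) (norm_nonneg _) (norm_nonneg _)

/-- There exist `C > 0` and `a > 0` such that for all `t > 1`, all `x, y ∈ ℝ^d` and all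
`1 ≤ j ≤ d`, `|y_j k_t^0(x,y)| ≤ C e^{-dt} e^{-a|x-y|²}`. -/
theorem mehlerKernel_coord_bound_large_time (d : ℕ) (hd : 1 ≤ d) :
    ∃ C > (0 : ℝ), ∃ a > (0 : ℝ), ∀ t : ℝ, 1 < t →
      ∀ x y : EuclideanSpace ℝ (Fin d), ∀ j : Fin d,
        |y j * mehlerKernel d t x y| ≤
          C * Real.exp (-(d : ℝ) * t) * Real.exp (-a * ‖x - y‖ ^ 2) :=
  mehlerKernel_coord_bound_large_time_general d
end

section
/- There exists a constant C > 0 such that for all 0 < t ≤ 1, all x, y ∈ ℝ^d and all 1 ≤ j ≤ d, |(y_j + x_j) · k_t^0(x,y)| ≤ C t^{−(d+1)/2} e^{−|x−y|²/(4t)}. -/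
open Real

/-!
For `0 < t ≤ 1` the kernel splits into three factors. Since `sinh (2t) ≥ 2t`, the prefactor
is at most `(4πt)^{-d/2}`. Since `tanh t ≤ t`, i.e. `coth t ≥ 1/t`, the `|x-y|²` factor is at
most `e^{-|x-y|²/(4t)}`. Since `tanh t ≥ t/2` on `[0,1]`, the remaining Gaussian in `|x+y|`
absorbs the coordinate `y_j + x_j` at the cost of `t^{-1/2}`, because `u e^{-a u²} ≤ a^{-1/2}`.
-/

namespace Real

lemma mul_sinh_nonneg (u : ℝ) : 0 ≤ u * sinh u := by
  rcases le_total 0 u with hu | hu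
  · exact mul_nonneg hu (sinh_nonneg_iff.mpr hu)
  · exact mul_nonneg_of_nonpos_of_nonpos hu (sinh_nonpos_iff.mpr hu)

lemma tanh_le_self {t : ℝ} (ht : 0 ≤ t) : tanh t ≤ t := by
  rw [tanh_eq_sinh_div_cosh, div_le_iff₀ (cosh_pos t)]
  exact sinh_le_mul_cosh ht

lemma cosh_lt_two {t : ℝ} (ht₀ : 0 ≤ t) (ht₁ : t ≤ 1) : cosh t < 2 := by
  have h₁ : exp t ≤ exp 1 := exp_le_exp.mpr ht₁
  have h₂ : exp (-t) ≤ 1 := exp_le_one_iff.mpr (by linarith)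
  rw [cosh_eq]
  linarith [exp_one_lt_three]

lemma half_le_tanh {t : ℝ} (ht₀ : 0 ≤ t) (ht₁ : t ≤ 1) : t / 2 ≤ tanh t := by
  rw [tanh_eq_sinh_div_cosh, div_le_div_iff₀ two_pos (cosh_pos t)]
  nlinarith [self_le_sinh_iff.mpr ht₀, cosh_lt_two ht₀ ht₁]

lemma abs_mul_exp_neg_mul_sq_le {a : ℝ} (ha : 0 < a) (u : ℝ) :
    |u| * exp (-(a * u ^ 2)) ≤ 1 / √a := by
  set v := √a * |u|
  have hv : v ^ 2 = a * u ^ 2 := by rw [mul_pow, sq_sqrt ha.le, sq_abs]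
  have hv_le : v ≤ exp (a * u ^ 2) := by
    nlinarith [add_one_le_exp (a * u ^ 2), sq_nonneg (v - 1)]
  rw [le_div_iff₀ (sqrt_pos.mpr ha), exp_neg, mul_right_comm, ← div_eq_mul_inv,
    div_le_one (exp_pos _), mul_comm]
  exact hv_le

end Real

lemma mehlerKernel_eq_mul (d : ℕ) (t : ℝ) (x y : EuclideanSpace ℝ (Fin d)) :
    mehlerKernel d t x y =
      (2 * π * sinh (2 * t)) ^ (-(d : ℝ) / 2) * exp (-(tanh t / 4 * ‖x + y‖ ^ 2)) *
        exp (-(cosh t / sinh t / 4 * ‖x - y‖ ^ 2)) := by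
  rw [mul_assoc, ← exp_add, mehlerKernel]
  ring_nf

lemma mehlerKernel_prefactor_le (d : ℕ) {t : ℝ} (ht : 0 < t) :
    (2 * π * sinh (2 * t)) ^ (-(d : ℝ) / 2) ≤
      (4 * π) ^ (-(d : ℝ) / 2) * t ^ (-(d : ℝ) / 2) := by
  have hexp : -(d : ℝ) / 2 ≤ 0 := by
    rw [neg_div, neg_nonpos]
    positivity
  rw [← mul_rpow (by positivity) ht.le]
  refine rpow_le_rpow_of_nonpos (by positivity) ?_ hexp
  nlinarith [self_le_sinh_iff.mpr (by linarith : 0 ≤ 2 * t), pi_pos]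

lemma exp_neg_coth_mul_sq_le {t : ℝ} (ht : 0 < t) (r : ℝ) :
    exp (-(cosh t / sinh t / 4 * r ^ 2)) ≤ exp (-r ^ 2 / (4 * t)) := by
  have hcoth : 1 / t ≤ cosh t / sinh t := by
    rw [one_div, ← inv_div, ← tanh_eq_sinh_div_cosh]
    have htanh : 0 < tanh t := by
      rw [tanh_eq_sinh_div_cosh]
      exact div_pos (sinh_pos_iff.mpr ht) (cosh_pos t)
    exact inv_anti₀ htanh (tanh_le_self ht.le)
  rw [exp_le_exp, neg_div, neg_le_neg_iff]
  calc r ^ 2 / (4 * t) = 1 / t / 4 * r ^ 2 := by ring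
    _ ≤ cosh t / sinh t / 4 * r ^ 2 := by gcongr

lemma abs_mul_exp_neg_tanh_mul_sq_le {t : ℝ} (ht₀ : 0 < t) (ht₁ : t ≤ 1) (u : ℝ) :
    |u| * exp (-(tanh t / 4 * u ^ 2)) ≤ √8 * t ^ (-(1 : ℝ) / 2) := by
  have htanh : t / 8 ≤ tanh t / 4 := by linarith [half_le_tanh ht₀.le ht₁]
  calc |u| * exp (-(tanh t / 4 * u ^ 2)) ≤ |u| * exp (-(t / 8 * u ^ 2)) := by gcongr
    _ ≤ 1 / √(t / 8) := abs_mul_exp_neg_mul_sq_le (by positivity) u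
    _ = √8 * t ^ (-(1 : ℝ) / 2) := by
      rw [neg_div, rpow_neg ht₀.le, ← sqrt_eq_rpow, sqrt_div ht₀.le, one_div_div,
        div_eq_mul_inv]

theorem mehlerKernel_coord_sum_bound_general (d : ℕ) :
    ∃ C > (0 : ℝ), ∀ t : ℝ, 0 < t → t ≤ 1 →
      ∀ x y : EuclideanSpace ℝ (Fin d), ∀ j : Fin d,
        |(y j + x j) * mehlerKernel d t x y| ≤
          C * t ^ (-((d : ℝ) + 1) / 2) * Real.exp (-‖x - y‖ ^ 2 / (4 * t)) := by
  refine ⟨(4 * π) ^ (-(d : ℝ) / 2) * √8, by positivity, fun t ht₀ ht₁ x y j => ?_⟩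
  have hcoord :
      |y j + x j| * exp (-(tanh t / 4 * ‖x + y‖ ^ 2)) ≤ √8 * t ^ (-(1 : ℝ) / 2) :=
    calc |y j + x j| * exp (-(tanh t / 4 * ‖x + y‖ ^ 2))
        ≤ |‖x + y‖| * exp (-(tanh t / 4 * ‖x + y‖ ^ 2)) := by
          refine mul_le_mul_of_nonneg_right ?_ (exp_pos _).le
          simpa [add_comm] using PiLp.norm_apply_le (x + y) j
      _ ≤ √8 * t ^ (-(1 : ℝ) / 2) := abs_mul_exp_neg_tanh_mul_sq_le ht₀ ht₁ _
  have ht_split : t ^ (-((d : ℝ) + 1) / 2) = t ^ (-(d : ℝ) / 2) * t ^ (-(1 : ℝ) / 2) := by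
    rw [← rpow_add ht₀]
    ring_nf
  rw [abs_mul, abs_of_pos (mehlerKernel_pos d ht₀ x y), mehlerKernel_eq_mul, ht_split]
  calc |y j + x j| * ((2 * π * sinh (2 * t)) ^ (-(d : ℝ) / 2) *
        exp (-(tanh t / 4 * ‖x + y‖ ^ 2)) * exp (-(cosh t / sinh t / 4 * ‖x - y‖ ^ 2)))
      = (2 * π * sinh (2 * t)) ^ (-(d : ℝ) / 2) *
        (|y j + x j| * exp (-(tanh t / 4 * ‖x + y‖ ^ 2))) *
          exp (-(cosh t / sinh t / 4 * ‖x - y‖ ^ 2)) := by ring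
    _ ≤ ((4 * π) ^ (-(d : ℝ) / 2) * t ^ (-(d : ℝ) / 2)) * (√8 * t ^ (-(1 : ℝ) / 2)) *
          exp (-‖x - y‖ ^ 2 / (4 * t)) := by
      gcongr ?_ * ?_ * ?_
      · exact mehlerKernel_prefactor_le d ht₀
      · exact exp_neg_coth_mul_sq_le ht₀ _
    _ = (4 * π) ^ (-(d : ℝ) / 2) * √8 * (t ^ (-(d : ℝ) / 2) * t ^ (-(1 : ℝ) / 2)) *
          exp (-‖x - y‖ ^ 2 / (4 * t)) := by ring

/-- There exists `C > 0` such that for all `0 < t ≤ 1`, all `x, y ∈ ℝ^d` and all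
`1 ≤ j ≤ d`, `|(y_j + x_j) k_t^0(x,y)| ≤ C t^{-(d+1)/2} e^{-|x-y|²/(4t)}`. -/
theorem mehlerKernel_coord_sum_bound (d : ℕ) (hd : 1 ≤ d) :
    ∃ C > (0 : ℝ), ∀ t : ℝ, 0 < t → t ≤ 1 →
      ∀ x y : EuclideanSpace ℝ (Fin d), ∀ j : Fin d,
        |(y j + x j) * mehlerKernel d t x y| ≤
          C * t ^ (-((d : ℝ) + 1) / 2) * Real.exp (-‖x - y‖ ^ 2 / (4 * t)) :=
  mehlerKernel_coord_sum_bound_general d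
end

section
/- For every b > 0 there exists a constant C > 0 such that for all t > 0 and all real numbers u, v with uv ≥ 0 and v ≠ 0, one has |1 − e^{−2buv/t}| / |v| ≤ C (t^{−1/2} + t^{−1}|u − v|). -/
/-!
For `x ≥ 0` we have `0 ≤ 1 - e^{-x} ≤ min x 1`. Splitting `uv = v² + v(u - v) ≤ v² + |v| |u - v|`
and using `min (a + c) 1 ≤ min a 1 + c ≤ √a + c`, the quantity `|1 - e^{-2buv/t}|` is at most
`√(2b) |v| / √t + 2b |v| |u - v| / t`; dividing by `|v|` gives the bound with `C = √(2b) + 2b`.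
-/

open Real

lemma min_one_le_sqrt {a : ℝ} (ha : 0 ≤ a) : min a 1 ≤ √a := by
  rcases le_total a 1 with h | h
  · rw [min_eq_left h]
    exact Real.le_sqrt_of_sq_le (by nlinarith)
  · exact (min_le_right a 1).trans (Real.one_le_sqrt.mpr h)

lemma abs_one_sub_exp_neg_le_min {x : ℝ} (hx : 0 ≤ x) : |1 - exp (-x)| ≤ min x 1 := by
  have hle : exp (-x) ≤ 1 := exp_le_one_iff.mpr (neg_nonpos.mpr hx)
  rw [abs_of_nonneg (sub_nonneg.mpr hle)]
  exact le_min (by linarith [one_sub_le_exp_neg x]) (by linarith [exp_pos (-x)])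

lemma abs_one_sub_exp_neg_le_sqrt_add {x a c : ℝ} (hx : 0 ≤ x) (ha : 0 ≤ a) (hc : 0 ≤ c)
    (hxac : x ≤ a + c) : |1 - exp (-x)| ≤ √a + c :=
  calc |1 - exp (-x)| ≤ min x 1 := abs_one_sub_exp_neg_le_min hx
    _ ≤ min (a + c) 1 := min_le_min_right 1 hxac
    _ ≤ min a 1 + c := by
      rw [← min_add_add_right]; exact min_le_min_left _ (le_add_of_nonneg_right hc)
    _ ≤ √a + c := by gcongr; exact min_one_le_sqrt ha

lemma rpow_neg_one_div_two {t : ℝ} (ht : 0 ≤ t) : t ^ (-(1 : ℝ) / 2) = (√t)⁻¹ := by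
  rw [sqrt_eq_rpow, ← rpow_neg ht]; norm_num

lemma mul_le_sq_add_abs_mul_abs_sub (u v : ℝ) : u * v ≤ v ^ 2 + |v| * |u - v| := by
  have : u * v = v ^ 2 + v * (u - v) := by ring
  rw [this, ← abs_mul]; linarith [le_abs_self (v * (u - v))]

lemma abs_one_sub_exp_neg_two_mul_div_le {b t u v : ℝ} (hb : 0 ≤ b) (ht : 0 < t)
    (huv : 0 ≤ u * v) :
    |1 - exp (-(2 * b * u * v) / t)| ≤
      (√(2 * b) * t ^ (-(1 : ℝ) / 2) + 2 * b * (t⁻¹ * |u - v|)) * |v| := by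
  have hx : 0 ≤ 2 * b * u * v / t := by
    rw [mul_assoc]; positivity
  have hsplit : 2 * b * u * v / t ≤ 2 * b * v ^ 2 / t + 2 * b * (t⁻¹ * |u - v|) * |v| := by
    rw [mul_assoc, div_eq_mul_inv, div_eq_mul_inv]
    have : 0 ≤ 2 * b * t⁻¹ := by positivity
    nlinarith [mul_le_sq_add_abs_mul_abs_sub u v]
  have key := abs_one_sub_exp_neg_le_sqrt_add hx (by positivity) (by positivity) hsplit
  rw [neg_div]
  convert key using 2
  rw [rpow_neg_one_div_two ht.le, sqrt_div' _ ht.le, sqrt_mul' _ (sq_nonneg v), sqrt_sq_eq_abs]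
  ring

/-- For every `b > 0` there exists `C > 0` such that for all `t > 0` and all real `u, v`
with `uv ≥ 0` and `v ≠ 0`, `|1 - e^{-2buv/t}|/|v| ≤ C (t^{-1/2} + t^{-1}|u - v|)`. -/
theorem phi_t_bound (b : ℝ) (hb : 0 < b) :
    ∃ C > (0 : ℝ), ∀ t : ℝ, 0 < t → ∀ u v : ℝ, 0 ≤ u * v → v ≠ 0 →
      |1 - Real.exp (-(2 * b * u * v) / t)| / |v| ≤
        C * (t ^ (-(1 : ℝ) / 2) + t⁻¹ * |u - v|) := by
  refine ⟨√(2 * b) + 2 * b, by positivity, fun t ht u v huv hv => ?_⟩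
  have hX : 0 ≤ t ^ (-(1 : ℝ) / 2) := by positivity
  have hY : 0 ≤ t⁻¹ * |u - v| := by positivity
  rw [div_le_iff₀ (abs_pos.mpr hv)]
  calc |1 - exp (-(2 * b * u * v) / t)|
      ≤ (√(2 * b) * t ^ (-(1 : ℝ) / 2) + 2 * b * (t⁻¹ * |u - v|)) * |v| :=
        abs_one_sub_exp_neg_two_mul_div_le hb.le ht huv
    _ ≤ (√(2 * b) + 2 * b) * (t ^ (-(1 : ℝ) / 2) + t⁻¹ * |u - v|) * |v| := by
        gcongr
        nlinarith [sqrt_nonneg (2 * b)]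
end

section
/- Let α ∈ ℝ^d with ⟨α,α⟩ = 2 and let σ_α(y) = y − ⟨y,α⟩α be the reflection in the hyperplane orthogonal to α. For every b > 0 there exists a constant C > 0 such that for all t > 0 and all y, η ∈ ℝ^d with ⟨y,α⟩ ≠ 0, | e^{−(b/t)|y−η|²} − e^{−(b/t)|σ_α(y)−η|²} | / |⟨y,α⟩| ≤ C t^{−1/2} ( e^{−(b/(2t))|y−η|²} + e^{−(b/(2t))|σ_α(y)−η|²} ). -/
/-!
Write `A = ‖y - η‖²` and `B = ‖σ_α(y) - η‖²`. Since `e^{-(b/t)A} - e^{-(b/t)B}` is a difference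
of squares, it factors as `(e^{-aA} - e^{-aB}) (e^{-aA} + e^{-aB})` with `a = b/(2t)`, and the
second factor is the sum on the right-hand side. The Gaussian `x ↦ e^{-a‖x‖²}` is `√a`-Lipschitz,
because `2a|r| e^{-ar²} ≤ √a (1 + ar²) e^{-ar²} ≤ √a`. As `y - η` and `σ_α(y) - η` differ by
`⟨y,α⟩ α`, of norm `√2 |⟨y,α⟩|`, the first factor is at most `√(2a) |⟨y,α⟩| = √b t^{-1/2} |⟨y,α⟩|`.
-/

open Real
open scoped RealInnerProductSpace

lemma two_mul_abs_mul_exp_neg_mul_sq_le {a : ℝ} (ha : 0 ≤ a) (r : ℝ) :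
    2 * a * |r| * exp (-a * r ^ 2) ≤ √a := by
  have hamgm : 2 * a * |r| ≤ √a * (a * r ^ 2 + 1) := by
    obtain ⟨s, hs, rfl⟩ : ∃ s, 0 ≤ s ∧ a = s ^ 2 := ⟨√a, sqrt_nonneg a, (sq_sqrt ha).symm⟩
    rw [sqrt_sq hs, ← sq_abs r]
    nlinarith [mul_nonneg hs (sq_nonneg (s * |r| - 1))]
  calc 2 * a * |r| * exp (-a * r ^ 2)
      ≤ √a * (a * r ^ 2 + 1) * exp (-a * r ^ 2) := by gcongr
    _ ≤ √a * exp (a * r ^ 2) * exp (-a * r ^ 2) := by gcongr; exact add_one_le_exp _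
    _ = √a := by rw [mul_assoc, ← exp_add]; simp

lemma abs_exp_neg_mul_sq_sub_le {a : ℝ} (ha : 0 ≤ a) (r s : ℝ) :
    |exp (-a * r ^ 2) - exp (-a * s ^ 2)| ≤ √a * |r - s| := by
  have hderiv : ∀ x : ℝ, HasDerivAt (fun r : ℝ => exp (-a * r ^ 2))
      (exp (-a * x ^ 2) * (-a * (2 * x))) x := fun x => by
    simpa using ((hasDerivAt_pow 2 x).const_mul (-a)).exp
  have hbound : ∀ x : ℝ, ‖exp (-a * x ^ 2) * (-a * (2 * x))‖ ≤ √a := fun x => by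
    calc ‖exp (-a * x ^ 2) * (-a * (2 * x))‖ = 2 * a * |x| * exp (-a * x ^ 2) := by
          rw [norm_mul, norm_of_nonneg (exp_pos _).le, norm_mul, norm_neg, norm_of_nonneg ha,
            norm_mul, Real.norm_two, Real.norm_eq_abs]
          ring
      _ ≤ √a := two_mul_abs_mul_exp_neg_mul_sq_le ha x
  simpa only [Real.norm_eq_abs] using convex_univ.norm_image_sub_le_of_norm_hasDerivWithin_le
    (fun x _ => (hderiv x).hasDerivWithinAt) (fun x _ => hbound x) (Set.mem_univ s)
    (Set.mem_univ r)

lemma abs_exp_neg_mul_norm_sq_sub_le {E : Type*} [SeminormedAddCommGroup E] {a : ℝ} (ha : 0 ≤ a)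
    (x y : E) : |exp (-a * ‖x‖ ^ 2) - exp (-a * ‖y‖ ^ 2)| ≤ √a * ‖x - y‖ :=
  (abs_exp_neg_mul_sq_sub_le ha ‖x‖ ‖y‖).trans <|
    mul_le_mul_of_nonneg_left (abs_norm_sub_norm_le x y) (sqrt_nonneg a)

lemma exp_neg_mul_sub_exp_neg_mul (c A B : ℝ) :
    exp (-c * A) - exp (-c * B) =
      (exp (-(c / 2) * A) + exp (-(c / 2) * B)) * (exp (-(c / 2) * A) - exp (-(c / 2) * B)) := by
  rw [← sq_sub_sq, ← exp_nat_mul, ← exp_nat_mul]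
  ring_nf

/-- Let `α ∈ ℝ^d` with `⟨α,α⟩ = 2` and `σ_α(y) = y - ⟨y,α⟩α`. For every `b > 0` there is
`C > 0` such that for all `t > 0` and all `y, η ∈ ℝ^d` with `⟨y,α⟩ ≠ 0`,
`|e^{-(b/t)|y-η|²} - e^{-(b/t)|σ_α(y)-η|²}|/|⟨y,α⟩| ≤
  C t^{-1/2} (e^{-(b/(2t))|y-η|²} + e^{-(b/(2t))|σ_α(y)-η|²})`. -/
theorem reflection_difference_bound {d : ℕ} (α : EuclideanSpace ℝ (Fin d))
    (hα : ⟪α, α⟫ = (2 : ℝ)) (b : ℝ) (hb : 0 < b) :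
    ∃ C > (0 : ℝ), ∀ t : ℝ, 0 < t → ∀ y η : EuclideanSpace ℝ (Fin d), ⟪y, α⟫ ≠ (0 : ℝ) →
      |Real.exp (-(b / t) * ‖y - η‖ ^ 2) -
          Real.exp (-(b / t) * ‖(y - ⟪y, α⟫ • α) - η‖ ^ 2)| / |⟪y, α⟫| ≤
        C * t ^ (-(1 : ℝ) / 2) *
          (Real.exp (-(b / (2 * t)) * ‖y - η‖ ^ 2) +
            Real.exp (-(b / (2 * t)) * ‖(y - ⟪y, α⟫ • α) - η‖ ^ 2)) := by
  refine ⟨√b, sqrt_pos.mpr hb, fun t ht y η hyα => ?_⟩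
  have hnormα : ‖α‖ = √2 := by
    rw [← sqrt_sq (norm_nonneg α), ← real_inner_self_eq_norm_sq, hα]
  have hscale : √(b / (2 * t)) * √2 = √b * t ^ (-(1 : ℝ) / 2) := by
    rw [← sqrt_mul (by positivity), show b / (2 * t) * 2 = b / t by field_simp, sqrt_div hb.le,
      div_eq_mul_inv, neg_div, rpow_neg ht.le, sqrt_eq_rpow, sqrt_eq_rpow]
  have hhalf : b / t / 2 = b / (2 * t) := by field_simp
  have hgauss := abs_exp_neg_mul_norm_sq_sub_le (by positivity : 0 ≤ b / (2 * t))
    (y - η) ((y - ⟪y, α⟫ • α) - η)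
  rw [show y - η - (y - ⟪y, α⟫ • α - η) = ⟪y, α⟫ • α by abel, norm_smul, hnormα,
    Real.norm_eq_abs] at hgauss
  rw [div_le_iff₀ (abs_pos.mpr hyα), exp_neg_mul_sub_exp_neg_mul, hhalf, abs_mul,
    abs_of_pos (by positivity), mul_comm]
  calc _ ≤ √(b / (2 * t)) * (|⟪y, α⟫| * √2) * _ := by gcongr
    _ = _ := by rw [← hscale]; ring
end
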